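/- arXiv:2406.06892 — 5 statements merged into one kernel-verified Lean document; each statement's English description precedes it below -/
import Mathlib

section
/- Let ℓ > 1 be real and let k : ℕ → (0,∞) satisfy k(n)/n → 0 as n → ∞. Then the set W(ℓ;k) = {n ∈ ℕ : |σ(n) − ℓ·n| < k(n)} has asymptotic density 0, i.e., (1/x)·#{n ≤ x : |σ(n) − ℓ·n| < k(n)} → 0 as x → ∞. -/
/-- `sigma1 n` is the sum of the positive divisors of `n`. -/
noncomputable def sigma1 (n : ℕ) : ℕ := ArithmeticFunction.sigma 1 n

open Filter

noncomputable def gg (p n : ℕ) : ℝ :=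
  (if p ∣ n then 1 else 0) - (if p^2 ∣ n then 1 else 0)

noncomputable def ww (p : ℕ) : ℝ := 1/(p:ℝ) - 1/(p:ℝ)^2

lemma gg_eq_zero {p n : ℕ} (h : p ∣ n → p^2 ∣ n) : gg p n = 0 := by
  unfold gg
  by_cases h1 : p ∣ n
  · simp [h1, h h1]
  · have h2 : ¬ p^2 ∣ n := fun hd => h1 ((dvd_pow_self p two_ne_zero).trans hd)
    simp [h1, h2]


lemma sigma1_prime {p : ℕ} (hp : p.Prime) : sigma1 p = p + 1 := by
  unfold sigma1
  rw [ArithmeticFunction.sigma_one_apply, hp.divisors, Finset.sum_pair hp.one_lt.ne]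
  omega

lemma sigma1_mul_prime {p m : ℕ} (hp : p.Prime) (h : ¬ p ∣ m) :
    sigma1 (p * m) = (p + 1) * sigma1 m := by
  unfold sigma1
  rw [ArithmeticFunction.isMultiplicative_sigma.map_mul_of_coprime
    ((Nat.Prime.coprime_iff_not_dvd hp).mpr h)]
  congr 1
  have := sigma1_prime hp
  unfold sigma1 at this
  exact this

lemma sum_ind (X d : ℕ) :
    ∑ n ∈ Finset.Ioc 0 X, (if d ∣ n then (1:ℝ) else 0) = ((X / d : ℕ) : ℝ) := by
  rw [Finset.sum_boole, Nat.Ioc_filter_dvd_card_eq_div]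

lemma cast_div_lower {X d : ℕ} (hd : 0 < d) : (X:ℝ)/d - 1 ≤ ((X / d : ℕ) : ℝ) := by
  have h1 := Nat.div_add_mod X d
  have h2 : X % d < d := Nat.mod_lt _ hd
  have hd' : (0:ℝ) < d := by exact_mod_cast hd
  have h3 : (X:ℝ) = d * ((X/d : ℕ):ℝ) + ((X % d : ℕ):ℝ) := by exact_mod_cast h1.symm
  have h2' : ((X % d : ℕ):ℝ) < d := by exact_mod_cast h2
  rw [sub_le_iff_le_add, div_le_iff₀ hd']
  nlinarith

lemma ww_nonneg {p : ℕ} (hp : 1 ≤ p) : 0 ≤ ww p := by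
  have h : (1:ℝ) ≤ p := by exact_mod_cast hp
  unfold ww
  rw [sub_nonneg]
  apply one_div_le_one_div_of_le (by linarith)
  nlinarith

lemma cast_div_le' (X d : ℕ) : ((X / d : ℕ) : ℝ) ≤ (X:ℝ)/d := Nat.cast_div_le

lemma sum_gg (X p : ℕ) :
    ∑ n ∈ Finset.Ioc 0 X, gg p n = ((X / p : ℕ) : ℝ) - ((X / p^2 : ℕ) : ℝ) := by
  unfold gg
  rw [Finset.sum_sub_distrib, sum_ind, sum_ind]

lemma sum_gg_le {X p : ℕ} (hp : 0 < p) :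
    ∑ n ∈ Finset.Ioc 0 X, gg p n ≤ X * ww p + 1 := by
  rw [sum_gg]
  have h1 := cast_div_le' X p
  have h2 := cast_div_lower (X := X) (d := p^2) (by positivity)
  unfold ww
  have hp' : (0:ℝ) < p := by exact_mod_cast hp
  have e2 : ((p^2 : ℕ):ℝ) = (p:ℝ)^2 := by push_cast; ring
  rw [e2] at h2
  rw [mul_sub]
  have : (X:ℝ) * (1/p) = X/p := by ring
  have h4 : (X:ℝ) * (1/(p:ℝ)^2) = X/(p:ℝ)^2 := by ring
  linarith

lemma sum_gg_ge {X p : ℕ} (hp : 0 < p) :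
    (X:ℝ) * ww p - 1 ≤ ∑ n ∈ Finset.Ioc 0 X, gg p n := by
  rw [sum_gg]
  have h1 := cast_div_lower (X := X) (d := p) hp
  have h2 := cast_div_le' X (p^2)
  unfold ww
  have e2 : ((p^2 : ℕ):ℝ) = (p:ℝ)^2 := by push_cast; ring
  rw [e2] at h2
  rw [mul_sub]
  have h3 : (X:ℝ) * (1/p) = X/p := by ring
  have h4 : (X:ℝ) * (1/(p:ℝ)^2) = X/(p:ℝ)^2 := by ring
  linarith

lemma gg_sq (p n : ℕ) : gg p n * gg p n = gg p n := by
  unfold gg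
  by_cases h2 : p^2 ∣ n
  · have h1 : p ∣ n := (dvd_pow_self p two_ne_zero).trans h2
    simp [h1, h2]
  · by_cases h1 : p ∣ n <;> simp [h1, h2]

lemma ind_mul_ind {a b n : ℕ} (h : Nat.Coprime a b) :
    (if a ∣ n then (1:ℝ) else 0) * (if b ∣ n then (1:ℝ) else 0)
      = (if a * b ∣ n then (1:ℝ) else 0) := by
  by_cases ha : a ∣ n
  · by_cases hb : b ∣ n
    · simp [ha, hb, Nat.Coprime.mul_dvd_of_dvd_of_dvd h ha hb]
    · have : ¬ a * b ∣ n := fun hd => hb ((dvd_mul_left b a).trans hd)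
      simp [ha, hb, this]
  · have : ¬ a * b ∣ n := fun hd => ha ((dvd_mul_right a b).trans hd)
    simp [ha, this]

lemma gg_mul {p q : ℕ} (hp : p.Prime) (hq : q.Prime) (hne : p ≠ q) (n : ℕ) :
    gg p n * gg q n =
      (if p*q ∣ n then (1:ℝ) else 0) - (if p*q^2 ∣ n then (1:ℝ) else 0)
      - (if p^2*q ∣ n then (1:ℝ) else 0) + (if p^2*q^2 ∣ n then (1:ℝ) else 0) := by
  have hco : Nat.Coprime p q := (Nat.coprime_primes hp hq).mpr hne
  have h11 := ind_mul_ind (n := n) hco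
  have h12 := ind_mul_ind (n := n) (Nat.Coprime.pow_right 2 hco)
  have h21 := ind_mul_ind (n := n) (Nat.Coprime.pow_left 2 hco)
  have h22 := ind_mul_ind (n := n) (Nat.Coprime.pow_left 2 (Nat.Coprime.pow_right 2 hco))
  unfold gg
  rw [sub_mul, mul_sub, mul_sub, h11, h12, h21, h22]
  ring

lemma sum_gg_mul_le {X p q : ℕ} (hp : p.Prime) (hq : q.Prime) (hne : p ≠ q) :
    ∑ n ∈ Finset.Ioc 0 X, gg p n * gg q n ≤ (X:ℝ) * (ww p * ww q) + 2 := by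
  have hp0 : (0:ℝ) < p := by exact_mod_cast hp.pos
  have hq0 : (0:ℝ) < q := by exact_mod_cast hq.pos
  calc ∑ n ∈ Finset.Ioc 0 X, gg p n * gg q n
      = ((X / (p*q) : ℕ) : ℝ) - ((X / (p*q^2) : ℕ) : ℝ)
        - ((X / (p^2*q) : ℕ) : ℝ) + ((X / (p^2*q^2) : ℕ) : ℝ) := by
        simp only [gg_mul hp hq hne]
        rw [Finset.sum_add_distrib, Finset.sum_sub_distrib, Finset.sum_sub_distrib,
          sum_ind, sum_ind, sum_ind, sum_ind]
    _ ≤ (X:ℝ)/((p:ℝ)*q) - ((X:ℝ)/((p:ℝ)*(q:ℝ)^2) - 1) - ((X:ℝ)/((p:ℝ)^2*q) - 1)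
        + (X:ℝ)/((p:ℝ)^2*(q:ℝ)^2) := by
        have b1 := cast_div_le' X (p*q)
        have b2 := cast_div_lower (X := X) (d := p*q^2) (Nat.mul_pos hp.pos (pow_pos hq.pos 2))
        have b3 := cast_div_lower (X := X) (d := p^2*q) (Nat.mul_pos (pow_pos hp.pos 2) hq.pos)
        have b4 := cast_div_le' X (p^2*q^2)
        push_cast at b1 b2 b3 b4
        linarith
    _ = (X:ℝ) * ((1/(p:ℝ) - 1/(p:ℝ)^2) * (1/(q:ℝ) - 1/(q:ℝ)^2)) + 2 := by
        field_simp
        ring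
    _ = (X:ℝ) * (ww p * ww q) + 2 := rfl

lemma exists_primes (T : ℝ) (P : ℕ) :
    ∃ R : Finset ℕ, (∀ p ∈ R, p.Prime ∧ P ≤ p) ∧
      T ≤ ∑ p ∈ R, ww p := by
  simp only [ww]
  have hsq : Summable (fun n : ℕ => 1/(n:ℝ)^2) :=
    Real.summable_one_div_nat_pow.mpr one_lt_two
  set K := ∑' n : ℕ, 1/(n:ℝ)^2 with hK
  set v := Set.indicator {p : ℕ | p.Prime ∧ P ≤ p} (fun n : ℕ => 1/(n:ℝ)) with hv
  have hvnonneg : ∀ n, 0 ≤ v n := fun n =>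
    Set.indicator_nonneg (fun p _ => by positivity) n
  have hvns : ¬ Summable v := by
    intro hs
    apply not_summable_one_div_on_primes
    have hw : Summable (Set.indicator ({p : ℕ | p.Prime} ∩ Set.Iio P)
        (fun n : ℕ => 1/(n:ℝ))) := by
      apply summable_of_finite_support
      apply Set.Finite.subset (Set.finite_Iio P)
      intro n hn
      simp only [Function.mem_support] at hn
      by_contra hnot
      exact hn (Set.indicator_of_notMem (fun h => hnot h.2) _)
    apply (hs.add hw).congr
    intro n
    by_cases h1 : n.Prime <;> by_cases h2 : P ≤ n <;>
      simp [hv, Set.indicator_apply, Set.mem_setOf_eq, Set.mem_Iio, h1, h2,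
        not_lt.mpr, lt_of_not_ge]
  have htend := (not_summable_iff_tendsto_nat_atTop_of_nonneg hvnonneg).mp hvns
  obtain ⟨n, hn⟩ := (htend.eventually_ge_atTop (T + K)).exists
  refine ⟨(Finset.range n).filter (fun p => p.Prime ∧ P ≤ p), ?_, ?_⟩
  · intro p hp; exact (Finset.mem_filter.mp hp).2
  · rw [Finset.sum_sub_distrib]
    have h1 : ∑ p ∈ (Finset.range n).filter (fun p => p.Prime ∧ P ≤ p), 1/(p:ℝ)
        = ∑ i ∈ Finset.range n, v i := by
      rw [hv, Finset.sum_indicator_eq_sum_filter]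
      simp only [Set.mem_setOf_eq]
    have h2 : ∑ p ∈ (Finset.range n).filter (fun p => p.Prime ∧ P ≤ p), 1/(p:ℝ)^2 ≤ K :=
      Summable.sum_le_tsum _ (fun i _ => by positivity) hsq
    linarith [h1 ▸ hn]

lemma exists_gap (R : Finset ℕ) (c : ℕ → ℝ)
    (hc : ∀ p ∈ R, ∀ q ∈ R, p ≠ q → c p ≠ c q) :
    ∃ ε : ℝ, 0 < ε ∧ ∀ p ∈ R, ∀ q ∈ R, p ≠ q → 2*ε ≤ |c p - c q| := by
  set S := ((R ×ˢ R).filter (fun pq => pq.1 ≠ pq.2)).image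
    (fun pq : ℕ × ℕ => |c pq.1 - c pq.2|) with hS
  by_cases h : S.Nonempty
  · refine ⟨S.min' h / 2, ?_, ?_⟩
    · obtain ⟨⟨p, q⟩, hpq, he⟩ := Finset.mem_image.mp (S.min'_mem h)
      rw [Finset.mem_filter, Finset.mem_product] at hpq
      have h0 := hc p hpq.1.1 q hpq.1.2 hpq.2
      have h1 : 0 < |c p - c q| := abs_pos.mpr (sub_ne_zero.mpr h0)
      linarith [he ▸ h1]
    · intro p hp q hq hne
      have hmem : |c p - c q| ∈ S := Finset.mem_image.mpr
        ⟨(p, q), Finset.mem_filter.mpr ⟨Finset.mem_product.mpr ⟨hp, hq⟩, hne⟩, rfl⟩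
      linarith [S.min'_le _ hmem]
  · refine ⟨1, one_pos, fun p hp q hq hne => absurd ?_ h⟩
    exact ⟨|c p - c q|, Finset.mem_image.mpr
      ⟨(p, q), Finset.mem_filter.mpr ⟨Finset.mem_product.mpr ⟨hp, hq⟩, hne⟩, rfl⟩⟩

lemma moment (R : Finset ℕ) (hR : ∀ p ∈ R, p.Prime) (X : ℕ) :
    ∑ n ∈ Finset.Ioc 0 X, (∑ p ∈ R, gg p n - ∑ p ∈ R, ww p)^2
      ≤ (X:ℝ) * (∑ p ∈ R, ww p) + R.card + 2*(R.card:ℝ)^2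
        + 2*(∑ p ∈ R, ww p)*R.card := by
  set μ := ∑ p ∈ R, ww p with hμ
  have hμ0 : 0 ≤ μ := Finset.sum_nonneg (fun p hp => ww_nonneg (hR p hp).pos)
  have hSf : (X:ℝ)*μ - R.card ≤ ∑ n ∈ Finset.Ioc 0 X, ∑ p ∈ R, gg p n := by
    rw [Finset.sum_comm]
    calc (X:ℝ)*μ - R.card = ∑ p ∈ R, ((X:ℝ)*ww p - 1) := by
          rw [Finset.sum_sub_distrib, ← Finset.mul_sum, Finset.sum_const,
            nsmul_eq_mul, mul_one]
      _ ≤ _ := Finset.sum_le_sum (fun p hp => sum_gg_ge (hR p hp).pos)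
  have hSf2 : ∑ n ∈ Finset.Ioc 0 X, (∑ p ∈ R, gg p n)^2
      ≤ (X:ℝ)*μ + R.card + (X:ℝ)*μ^2 + 2*(R.card:ℝ)^2 := by
    have e1 : ∀ n : ℕ, (∑ p ∈ R, gg p n)^2 = ∑ p ∈ R, ∑ q ∈ R, gg p n * gg q n :=
      fun n => by rw [pow_two, Finset.sum_mul_sum]
    calc ∑ n ∈ Finset.Ioc 0 X, (∑ p ∈ R, gg p n)^2
        = ∑ p ∈ R, ∑ q ∈ R, ∑ n ∈ Finset.Ioc 0 X, gg p n * gg q n := by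
          simp_rw [e1]
          rw [Finset.sum_comm]
          exact Finset.sum_congr rfl (fun p _ => Finset.sum_comm)
      _ ≤ ∑ p ∈ R, ((X:ℝ)*ww p + 1 + ((X:ℝ)*ww p*μ + 2*R.card)) := by
          apply Finset.sum_le_sum; intro p hp
          rw [← Finset.add_sum_erase _ _ hp]
          have hdiag : ∑ n ∈ Finset.Ioc 0 X, gg p n * gg p n ≤ (X:ℝ)*ww p + 1 := by
            simp_rw [gg_sq]; exact sum_gg_le (hR p hp).pos
          have hoff : ∑ q ∈ R.erase p, ∑ n ∈ Finset.Ioc 0 X, gg p n * gg q n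
              ≤ (X:ℝ)*ww p*μ + 2*R.card := by
            calc ∑ q ∈ R.erase p, ∑ n ∈ Finset.Ioc 0 X, gg p n * gg q n
                ≤ ∑ q ∈ R.erase p, ((X:ℝ)*(ww p * ww q) + 2) :=
                  Finset.sum_le_sum (fun q hq => sum_gg_mul_le (hR p hp)
                    (hR q (Finset.mem_of_mem_erase hq))
                    (Finset.ne_of_mem_erase hq).symm)
              _ = (X:ℝ)*ww p * (∑ q ∈ R.erase p, ww q) + 2*((R.erase p).card:ℝ) := by
                  rw [Finset.sum_add_distrib, Finset.sum_const, nsmul_eq_mul]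
                  have e9 : ∀ q ∈ R.erase p, (X:ℝ)*(ww p*ww q) = (X:ℝ)*ww p*ww q :=
                    fun q _ => by ring
                  rw [Finset.sum_congr rfl e9, ← Finset.mul_sum]
                  ring
              _ ≤ (X:ℝ)*ww p*μ + 2*R.card := by
                  have h1 : ∑ q ∈ R.erase p, ww q ≤ μ :=
                    Finset.sum_le_sum_of_subset_of_nonneg (Finset.erase_subset p R)
                      (fun q hq _ => ww_nonneg (hR q hq).pos)
                  have h2 : ((R.erase p).card:ℝ) ≤ R.card := by
                    exact_mod_cast Finset.card_le_card (Finset.erase_subset p R)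
                  have h3 : 0 ≤ (X:ℝ)*ww p :=
                    mul_nonneg (Nat.cast_nonneg X) (ww_nonneg (hR p hp).pos)
                  nlinarith
          linarith
      _ = (X:ℝ)*μ + R.card + (X:ℝ)*μ^2 + 2*(R.card:ℝ)^2 := by
          have e2 : ∀ p : ℕ, (X:ℝ)*ww p + 1 + ((X:ℝ)*ww p*μ + 2*R.card)
              = ww p * ((X:ℝ) + (X:ℝ)*μ) + (1 + 2*(R.card:ℝ)) := fun p => by ring
          simp_rw [e2]
          rw [Finset.sum_add_distrib, ← Finset.sum_mul, Finset.sum_const, nsmul_eq_mul]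
          ring
  have hcard : ((Finset.Ioc 0 X).card : ℝ) = X := by rw [Nat.card_Ioc]; simp
  have expand : ∑ n ∈ Finset.Ioc 0 X, (∑ p ∈ R, gg p n - μ)^2
      = (∑ n ∈ Finset.Ioc 0 X, (∑ p ∈ R, gg p n)^2)
        - 2*μ*(∑ n ∈ Finset.Ioc 0 X, ∑ p ∈ R, gg p n) + (X:ℝ)*μ^2 := by
    have e3 : ∀ n : ℕ, (∑ p ∈ R, gg p n - μ)^2
        = (∑ p ∈ R, gg p n)^2 - 2*μ*(∑ p ∈ R, gg p n) + μ^2 := fun n => by ring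
    simp_rw [e3]
    rw [Finset.sum_add_distrib, Finset.sum_sub_distrib, ← Finset.mul_sum,
      Finset.sum_const, nsmul_eq_mul, hcard]
  rw [expand]
  have hmul := mul_le_mul_of_nonneg_left hSf (by linarith : (0:ℝ) ≤ 2*μ)
  nlinarith

lemma E_bound (R : Finset ℕ) (hR : ∀ p ∈ R, p.Prime) (X : ℕ) (A : Finset ℕ)
    (hA : A ⊆ (Finset.Ioc 0 X).filter (fun n => ∀ p ∈ R, p ∣ n → p^2 ∣ n)) :
    (A.card : ℝ) * (∑ p ∈ R, ww p)^2
      ≤ (X:ℝ) * (∑ p ∈ R, ww p) + R.card + 2*(R.card:ℝ)^2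
        + 2*(∑ p ∈ R, ww p)*R.card := by
  set μ := ∑ p ∈ R, ww p with hμ
  have h0 : ∀ n ∈ A, (∑ p ∈ R, gg p n) = 0 := by
    intro n hn
    have hn' := (Finset.mem_filter.mp (hA hn)).2
    exact Finset.sum_eq_zero (fun p hp => gg_eq_zero (hn' p hp))
  calc (A.card:ℝ) * μ^2 = ∑ n ∈ A, (∑ p ∈ R, gg p n - μ)^2 := by
        rw [Finset.sum_congr rfl (fun n hn => by rw [h0 n hn]; ring
          : ∀ n ∈ A, (∑ p ∈ R, gg p n - μ)^2 = μ^2)]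
        rw [Finset.sum_const, nsmul_eq_mul]
    _ ≤ ∑ n ∈ Finset.Ioc 0 X, (∑ p ∈ R, gg p n - μ)^2 :=
        Finset.sum_le_sum_of_subset_of_nonneg
          (hA.trans (Finset.filter_subset _ _)) (fun n _ _ => sq_nonneg _)
    _ ≤ _ := moment R hR X

lemma Ap_bound (ℓ ε : ℝ) (hε : 0 < ε) (R : Finset ℕ) (P : ℕ) (hP : 0 < P)
    (hR : ∀ p ∈ R, p.Prime ∧ P ≤ p)
    (hgap : ∀ p ∈ R, ∀ q ∈ R, p ≠ q →
      2*ε ≤ |ℓ*p/((p:ℝ)+1) - ℓ*q/((q:ℝ)+1)|) (X : ℕ) :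
    ∑ p ∈ R, (((Finset.Ioc 0 X).filter
        (fun n => |(sigma1 n:ℝ) - ℓ*n| < ε*n ∧ p ∣ n ∧ ¬ p^2 ∣ n)).card : ℝ)
      ≤ ((X / P : ℕ) : ℝ) := by
  set B : ℕ → Finset ℕ := fun p => (Finset.Ioc 0 (X/P)).filter
    (fun m => |(sigma1 m:ℝ) - (ℓ*p/((p:ℝ)+1))*m| < ε*m) with hB
  -- each A_p injects into B p
  have hinj : ∀ p ∈ R, ((Finset.Ioc 0 X).filter
      (fun n => |(sigma1 n:ℝ) - ℓ*n| < ε*n ∧ p ∣ n ∧ ¬ p^2 ∣ n)).card ≤ (B p).card := by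
    intro p hpR
    obtain ⟨hp, hPp⟩ := hR p hpR
    apply Finset.card_le_card_of_injOn (fun n => n / p)
    · intro n hn
      rw [Finset.mem_coe, Finset.mem_filter, Finset.mem_Ioc] at hn
      obtain ⟨⟨hn0, hnX⟩, hσ, hdvd, hndvd⟩ := hn
      set m := n / p with hm
      have hpm : p * m = n := Nat.mul_div_cancel' hdvd
      have hpm' : ¬ p ∣ m := by
        intro hd
        exact hndvd (by rw [← hpm, pow_two]; exact mul_dvd_mul_left p hd)
      have hm0 : 0 < m := Nat.div_pos (Nat.le_of_dvd hn0 hdvd) hp.pos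
      rw [hB, Finset.mem_coe, Finset.mem_filter, Finset.mem_Ioc]
      refine ⟨⟨hm0, ?_⟩, ?_⟩
      · calc m = n / p := rfl
          _ ≤ X / p := Nat.div_le_div_right hnX
          _ ≤ X / P := Nat.div_le_div_left hPp hP
      · have hσn : (sigma1 n : ℝ) = ((p:ℝ)+1) * sigma1 m := by
          rw [← hpm, sigma1_mul_prime hp hpm']
          push_cast
          ring
        have hnr : (n:ℝ) = p * m := by rw [← hpm]; push_cast; ring
        have hp1 : (0:ℝ) < (p:ℝ)+1 := by positivity
        have hm0' : (0:ℝ) < m := by exact_mod_cast hm0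
        rw [hσn, hnr] at hσ
        have key : (sigma1 m : ℝ) - (ℓ*p/((p:ℝ)+1))*m
            = (((p:ℝ)+1) * sigma1 m - ℓ*(p*m)) / ((p:ℝ)+1) := by
          field_simp
        rw [key, abs_div, abs_of_pos hp1, div_lt_iff₀ hp1]
        have hple : ε*((p:ℝ)*m) < ε*m*((p:ℝ)+1) := by nlinarith
        linarith
    · intro a ha b hb hab
      rw [Finset.mem_coe, Finset.mem_filter] at ha hb
      have hda := ha.2.2.1
      have hdb := hb.2.2.1
      simp only at hab
      rw [← Nat.mul_div_cancel' hda, ← Nat.mul_div_cancel' hdb, hab]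
  -- B p pairwise disjoint
  have hdisj : ∀ p ∈ R, ∀ q ∈ R, p ≠ q → Disjoint (B p) (B q) := by
    intro p hp q hq hne
    rw [Finset.disjoint_left]
    intro m hmp hmq
    rw [hB, Finset.mem_filter, Finset.mem_Ioc] at hmp hmq
    have hm0 : (0:ℝ) < m := by exact_mod_cast hmp.1.1
    have hg := hgap p hp q hq hne
    have htri : |ℓ*p/((p:ℝ)+1) - ℓ*q/((q:ℝ)+1)| * m
        ≤ |(sigma1 m:ℝ) - (ℓ*p/((p:ℝ)+1))*m| + |(sigma1 m:ℝ) - (ℓ*q/((q:ℝ)+1))*m| := by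
      have := abs_sub (((sigma1 m:ℝ) - (ℓ*p/((p:ℝ)+1))*m)) (((sigma1 m:ℝ) - (ℓ*q/((q:ℝ)+1))*m))
      calc |ℓ*p/((p:ℝ)+1) - ℓ*q/((q:ℝ)+1)| * m
          = |(ℓ*p/((p:ℝ)+1))*m - (ℓ*q/((q:ℝ)+1))*m| := by
            rw [← sub_mul, abs_mul, abs_of_pos hm0]
        _ = |((sigma1 m:ℝ) - (ℓ*q/((q:ℝ)+1))*m) - ((sigma1 m:ℝ) - (ℓ*p/((p:ℝ)+1))*m)| := by
            congr 1; ring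
        _ ≤ _ := by
            rw [abs_sub_comm]
            exact (abs_sub _ _).trans (by rw [add_comm])
    nlinarith [hmp.2, hmq.2, mul_le_mul_of_nonneg_right hg (le_of_lt hm0)]
  calc ∑ p ∈ R, (((Finset.Ioc 0 X).filter
        (fun n => |(sigma1 n:ℝ) - ℓ*n| < ε*n ∧ p ∣ n ∧ ¬ p^2 ∣ n)).card : ℝ)
      ≤ ∑ p ∈ R, ((B p).card : ℝ) := by
        apply Finset.sum_le_sum
        intro p hp
        exact_mod_cast hinj p hp
    _ = ((R.biUnion B).card : ℝ) := by
        rw [Finset.card_biUnion hdisj]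
        push_cast
        rfl
    _ ≤ (((Finset.Ioc 0 (X/P)).card : ℕ) : ℝ) := by
        have : R.biUnion B ⊆ Finset.Ioc 0 (X/P) := by
          intro m hm
          obtain ⟨p, _, hmp⟩ := Finset.mem_biUnion.mp hm
          exact (Finset.filter_subset _ _) hmp
        exact_mod_cast Finset.card_le_card this
    _ = ((X / P : ℕ) : ℝ) := by rw [Nat.card_Ioc]; simp

lemma key (ℓ : ℝ) (hℓ : 1 < ℓ) (δ : ℝ) (hδ : 0 < δ) :
    ∃ ε : ℝ, 0 < ε ∧ ∃ C : ℝ, 0 ≤ C ∧ ∀ X : ℕ,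
      (((Finset.Ioc 0 X).filter (fun n => |(sigma1 n:ℝ) - ℓ*n| < ε*n)).card : ℝ)
        ≤ δ * X + C := by
  have hℓ0 : (0:ℝ) < ℓ := by linarith
  set P : ℕ := ⌈2/δ⌉₊ + 1 with hPdef
  have hP0 : 0 < P := Nat.succ_pos _
  have hP2 : 2/δ ≤ (P:ℝ) := by
    calc 2/δ ≤ (⌈2/δ⌉₊ : ℝ) := Nat.le_ceil _
      _ ≤ P := by rw [hPdef]; push_cast; linarith
  obtain ⟨R, hR, hμT⟩ := exists_primes (2/δ) P
  set μ := ∑ p ∈ R, ww p with hμdef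
  have hμ0 : 0 < μ := lt_of_lt_of_le (by positivity) hμT
  -- gap
  have hcinj : ∀ p ∈ R, ∀ q ∈ R, p ≠ q →
      (fun p : ℕ => ℓ*p/((p:ℝ)+1)) p ≠ (fun p : ℕ => ℓ*p/((p:ℝ)+1)) q := by
    intro p _ q _ hne heq
    simp only at heq
    have hp1 : ((p:ℝ)+1) ≠ 0 := by positivity
    have hq1 : ((q:ℝ)+1) ≠ 0 := by positivity
    rw [div_eq_div_iff hp1 hq1] at heq
    have h2 : ℓ * ((p:ℝ) - q) = 0 := by linear_combination heq
    rcases mul_eq_zero.mp h2 with h | h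
    · linarith
    · exact hne (by exact_mod_cast sub_eq_zero.mp h)
  obtain ⟨ε, hε0, hgap⟩ := exists_gap R (fun p : ℕ => ℓ*p/((p:ℝ)+1)) hcinj
  set D : ℝ := (R.card:ℝ) + 2*(R.card:ℝ)^2 + 2*μ*(R.card:ℝ) with hDdef
  have hD0 : 0 ≤ D := by positivity
  refine ⟨ε, hε0, D/μ^2, by positivity, ?_⟩
  intro X
  set A := (Finset.Ioc 0 X).filter (fun n => |(sigma1 n:ℝ) - ℓ*n| < ε*n) with hA
  set AE := A.filter (fun n => ∀ p ∈ R, p ∣ n → p^2 ∣ n) with hAE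
  set Ap : ℕ → Finset ℕ := fun p => (Finset.Ioc 0 X).filter
    (fun n => |(sigma1 n:ℝ) - ℓ*n| < ε*n ∧ p ∣ n ∧ ¬ p^2 ∣ n) with hAp
  have hcover : A ⊆ AE ∪ R.biUnion Ap := by
    intro n hn
    rw [Finset.mem_union]
    by_cases h : ∀ p ∈ R, p ∣ n → p^2 ∣ n
    · exact Or.inl (Finset.mem_filter.mpr ⟨hn, h⟩)
    · push_neg at h
      obtain ⟨p, hpR, hdvd, hndvd⟩ := h
      refine Or.inr (Finset.mem_biUnion.mpr ⟨p, hpR, ?_⟩)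
      rw [hA, Finset.mem_filter] at hn
      exact Finset.mem_filter.mpr ⟨hn.1, hn.2, hdvd, hndvd⟩
  have hcard : (A.card : ℝ) ≤ (AE.card : ℝ) + ∑ p ∈ R, ((Ap p).card : ℝ) := by
    have h1 : A.card ≤ (AE ∪ R.biUnion Ap).card := Finset.card_le_card hcover
    have h2 : (AE ∪ R.biUnion Ap).card ≤ AE.card + (R.biUnion Ap).card :=
      Finset.card_union_le _ _
    have h3 : (R.biUnion Ap).card ≤ ∑ p ∈ R, (Ap p).card := Finset.card_biUnion_le
    push_cast
    have := h1.trans (h2.trans (Nat.add_le_add_left h3 _))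
    exact_mod_cast this
  -- AE bound
  have hAEb : (AE.card : ℝ) ≤ δ/2 * X + D/μ^2 := by
    have hsub : AE ⊆ (Finset.Ioc 0 X).filter (fun n => ∀ p ∈ R, p ∣ n → p^2 ∣ n) := by
      rw [hAE, hA, Finset.filter_filter]
      intro n hn
      rw [Finset.mem_filter] at hn ⊢
      exact ⟨hn.1, hn.2.2⟩
    have hEB := E_bound R (fun p hp => (hR p hp).1) X AE hsub
    have hEB' : (AE.card:ℝ) * μ^2 ≤ (X:ℝ)*μ + D := by
      rw [hμdef, hDdef]
      linarith [hEB]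
    have hstep : (AE.card : ℝ) * μ^2 ≤ (δ/2 * X + D/μ^2) * μ^2 := by
      rw [add_mul, div_mul_cancel₀ _ (by positivity : μ^2 ≠ 0)]
      have h2μ : 2 ≤ δ*μ := by
        rw [div_le_iff₀ hδ] at hμT
        linarith
      have hXμ : (X:ℝ) * μ ≤ δ/2 * X * μ^2 := by
        nlinarith [mul_nonneg (Nat.cast_nonneg (α := ℝ) X)
          (mul_nonneg hμ0.le (by linarith : (0:ℝ) ≤ δ*μ - 2))]
      linarith
    exact le_of_mul_le_mul_right hstep (by positivity)
  -- Ap bound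
  have hApb : ∑ p ∈ R, ((Ap p).card : ℝ) ≤ δ/2 * X := by
    calc ∑ p ∈ R, ((Ap p).card : ℝ) ≤ ((X / P : ℕ) : ℝ) :=
          Ap_bound ℓ ε hε0 R P hP0 hR hgap X
      _ ≤ (X:ℝ)/P := cast_div_le' X P
      _ ≤ δ/2 * X := by
          rw [div_le_iff₀ (by exact_mod_cast hP0 : (0:ℝ) < P)]
          have h2P : 2 ≤ (P:ℝ)*δ := by
            rw [div_le_iff₀ hδ] at hP2
            linarith
          nlinarith [Nat.cast_nonneg (α := ℝ) X]
  calc (A.card : ℝ) ≤ (AE.card : ℝ) + ∑ p ∈ R, ((Ap p).card : ℝ) := hcard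
    _ ≤ (δ/2 * X + D/μ^2) + δ/2 * X := add_le_add hAEb hApb
    _ = δ * X + D/μ^2 := by ring

theorem stmt_2 (ℓ : ℝ) (hℓ : 1 < ℓ) (k : ℕ → ℝ) (hkpos : ∀ n : ℕ, 0 < k n)
    (hk : Filter.Tendsto (fun n : ℕ => k n / n) Filter.atTop (nhds 0)) :
    Filter.Tendsto (fun x : ℝ =>
        ({n : ℕ | 1 ≤ n ∧ (n : ℝ) ≤ x ∧ |(sigma1 n : ℝ) - ℓ * n| < k n}.ncard : ℝ) / x)
      Filter.atTop (nhds 0) := by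
  rw [Metric.tendsto_nhds]
  intro δ hδ
  obtain ⟨ε, hε0, C, hC0, hkey⟩ := key ℓ hℓ (δ/2) (by linarith)
  obtain ⟨N, hN⟩ := Filter.eventually_atTop.mp (hk.eventually (Metric.ball_mem_nhds 0 hε0))
  have hkn : ∀ n : ℕ, N ≤ n → 1 ≤ n → k n < ε * n := by
    intro n hn h1
    have hb := hN n hn
    rw [Real.dist_eq, sub_zero] at hb
    have hn0 : (0:ℝ) < n := by exact_mod_cast h1
    have : k n / n < ε := lt_of_le_of_lt (le_abs_self _) hb
    rw [div_lt_iff₀ hn0] at this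
    linarith
  filter_upwards [Filter.eventually_ge_atTop (max 1 (2*(C + N + 1)/δ))] with x hx
  have hx1 : (1:ℝ) ≤ x := le_trans (le_max_left _ _) hx
  have hx0 : (0:ℝ) < x := by linarith
  have hx2 : 2*(C + N + 1)/δ ≤ x := le_trans (le_max_right _ _) hx
  set X := ⌊x⌋₊ with hX
  set F := (Finset.Ioc 0 X).filter (fun n => |(sigma1 n:ℝ) - ℓ*n| < k n) with hF
  have hSF : {n : ℕ | 1 ≤ n ∧ (n:ℝ) ≤ x ∧ |(sigma1 n:ℝ) - ℓ*n| < k n} = ↑F := by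
    ext n
    simp only [Set.mem_setOf_eq, hF, Finset.coe_filter, Finset.mem_Ioc]
    constructor
    · rintro ⟨h1, h2, h3⟩
      exact ⟨⟨h1, Nat.le_floor h2⟩, h3⟩
    · rintro ⟨⟨h1, h2⟩, h3⟩
      refine ⟨h1, ?_, h3⟩
      calc (n:ℝ) ≤ X := by exact_mod_cast h2
        _ ≤ x := Nat.floor_le (by linarith)
  rw [hSF, Set.ncard_coe_finset]
  have hsub : F ⊆ (Finset.Ioc 0 N) ∪
      (Finset.Ioc 0 X).filter (fun n => |(sigma1 n:ℝ) - ℓ*n| < ε*n) := by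
    intro n hn
    rw [hF, Finset.mem_filter, Finset.mem_Ioc] at hn
    obtain ⟨⟨h0, hXle⟩, hcond⟩ := hn
    rw [Finset.mem_union]
    by_cases hNle : n ≤ N
    · exact Or.inl (Finset.mem_Ioc.mpr ⟨h0, hNle⟩)
    · push_neg at hNle
      refine Or.inr (Finset.mem_filter.mpr ⟨Finset.mem_Ioc.mpr ⟨h0, hXle⟩, ?_⟩)
      exact hcond.trans (hkn n hNle.le h0)
  have hcount : (F.card : ℝ) ≤ N + (δ/2 * X + C) := by
    have h1 := Finset.card_le_card hsub
    have h2 := Finset.card_union_le (Finset.Ioc 0 N)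
      ((Finset.Ioc 0 X).filter (fun n => |(sigma1 n:ℝ) - ℓ*n| < ε*n))
    have h3 : (Finset.Ioc 0 N).card = N := by rw [Nat.card_Ioc]; simp
    have h4 := hkey X
    have h5 : (F.card : ℝ) ≤ (Finset.Ioc 0 N).card +
        (((Finset.Ioc 0 X).filter (fun n => |(sigma1 n:ℝ) - ℓ*n| < ε*n)).card : ℝ) := by
      exact_mod_cast h1.trans h2
    rw [h3] at h5
    linarith
  have hXx : (X:ℝ) ≤ x := Nat.floor_le (by linarith)
  rw [Real.dist_eq, sub_zero, abs_of_nonneg (by positivity)]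
  rw [div_lt_iff₀ hx0]
  have hδx : 2*(C + N + 1) ≤ δ * x := by
    rw [div_le_iff₀ hδ] at hx2
    linarith
  have hN0 : (0:ℝ) ≤ N := Nat.cast_nonneg N
  nlinarith
end

section
/- Let ℓ > 1 be real, let c > 0, and let k : ℕ → (0,∞) satisfy k(n)/(c·n) → 1 as n → ∞. Suppose D : ℝ → ℝ is continuous and satisfies (1/x)·#{n ≤ x : σ(n) ≤ u·n} → D(u) as x → ∞ for every real u. Then the set W(ℓ;k) = {n ∈ ℕ : |σ(n) − ℓ·n| < k(n)} has asymptotic density equal to D(ℓ + c) − D(ℓ − c). -/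
private lemma finite_aux (P : ℕ → Prop) (x : ℝ) :
    {n : ℕ | 1 ≤ n ∧ (n : ℝ) ≤ x ∧ P n}.Finite := by
  apply (Set.finite_Iic ⌈x⌉₊).subset
  intro n hn
  have h : (n : ℝ) ≤ (⌈x⌉₊ : ℝ) := hn.2.1.trans (Nat.le_ceil x)
  exact_mod_cast h

private lemma ncard_Iio_nat (N : ℕ) : (Set.Iio N).ncard = N := by
  rw [← Finset.coe_Iio, Set.ncard_coe_finset, Nat.card_Iio]

private lemma ncard_le_diff_add (A : Set ℕ) (N : ℕ) (hA : A.Finite) :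
    A.ncard ≤ (A \ Set.Iio N).ncard + N := by
  calc A.ncard ≤ ((A \ Set.Iio N) ∪ Set.Iio N).ncard := by
        apply Set.ncard_le_ncard
        · intro n hn
          by_cases h : n < N
          · exact Or.inr h
          · exact Or.inl ⟨hn, h⟩
        · exact hA.diff.union (Set.finite_Iio N)
    _ ≤ (A \ Set.Iio N).ncard + (Set.Iio N).ncard := Set.ncard_union_le _ _
    _ = (A \ Set.Iio N).ncard + N := by rw [ncard_Iio_nat]

private lemma count_upper (A B C : Set ℕ) (N : ℕ) (hA : A.Finite) (hB : B.Finite)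
    (hC : C.Finite)
    (hAC : ∀ n ∈ A, N ≤ n → n ∈ C) (hAB : ∀ n ∈ A, N ≤ n → n ∉ B) (hBC : B ⊆ C) :
    A.ncard + B.ncard ≤ C.ncard + N := by
  have hA' : (A \ Set.Iio N) ⊆ C := fun n hn => hAC n hn.1 (not_lt.mp hn.2)
  have hdisj : Disjoint (A \ Set.Iio N) B := by
    rw [Set.disjoint_left]
    intro n hn hnB
    exact hAB n hn.1 (not_lt.mp hn.2) hnB
  have h1 : A.ncard ≤ (A \ Set.Iio N).ncard + N := ncard_le_diff_add A N hA
  have h2 : (A \ Set.Iio N).ncard + B.ncard ≤ C.ncard := by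
    rw [← Set.ncard_union_eq hdisj hA.diff hB]
    exact Set.ncard_le_ncard (Set.union_subset hA' hBC) hC
  omega

private lemma count_lower (A B C : Set ℕ) (N : ℕ) (hA : A.Finite) (hB : B.Finite)
    (hC : C.Finite) (h : ∀ n ∈ A, N ≤ n → n ∈ B ∪ C) :
    A.ncard ≤ B.ncard + C.ncard + N := by
  have h1 := ncard_le_diff_add A N hA
  have h2 : (A \ Set.Iio N).ncard ≤ (B ∪ C).ncard :=
    Set.ncard_le_ncard (fun n hn => h n hn.1 (not_lt.mp hn.2)) (hB.union hC)
  have h3 := Set.ncard_union_le B C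
  omega

private lemma div_le_div_of_nonneg_right' {a b c : ℝ} (h : a ≤ b) (hc : 0 < c) :
    a / c ≤ b / c := by
  apply div_le_div_of_nonneg_right h hc.le

set_option maxHeartbeats 1000000 in
theorem stmt_3 (ℓ : ℝ) (hℓ : 1 < ℓ) (c : ℝ) (hc : 0 < c)
    (k : ℕ → ℝ) (hkpos : ∀ n : ℕ, 0 < k n)
    (hk : Filter.Tendsto (fun n : ℕ => k n / (c * n)) Filter.atTop (nhds 1))
    (D : ℝ → ℝ) (hDcont : Continuous D)
    (hD : ∀ u : ℝ, Filter.Tendsto (fun x : ℝ =>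
        ({n : ℕ | 1 ≤ n ∧ (n : ℝ) ≤ x ∧ (sigma1 n : ℝ) ≤ u * n}.ncard : ℝ) / x)
      Filter.atTop (nhds (D u))) :
    Filter.Tendsto (fun x : ℝ =>
        ({n : ℕ | 1 ≤ n ∧ (n : ℝ) ≤ x ∧ |(sigma1 n : ℝ) - ℓ * n| < k n}.ncard : ℝ) / x)
      Filter.atTop (nhds (D (ℓ + c) - D (ℓ - c))) := by
  set L : ℝ := D (ℓ + c) - D (ℓ - c) with hLdef
  rw [Metric.tendsto_nhds]
  intro δ hδ
  -- continuity of the endpoint functions in ε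
  have hφ : Filter.Tendsto
      (fun ε : ℝ => D (ℓ + (1 + ε) * c) - D (ℓ - (1 + ε) * c)) (nhds 0) (nhds L) := by
    have hcont : Continuous (fun ε : ℝ => D (ℓ + (1 + ε) * c) - D (ℓ - (1 + ε) * c)) := by
      fun_prop
    have := hcont.tendsto 0
    simpa using this
  have hψ : Filter.Tendsto
      (fun ε : ℝ => D (ℓ + (1 - ε) * c) - D (ℓ - (1 - ε) * c)) (nhds 0) (nhds L) := by
    have hcont : Continuous (fun ε : ℝ => D (ℓ + (1 - ε) * c) - D (ℓ - (1 - ε) * c)) := by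
      fun_prop
    have := hcont.tendsto 0
    simpa using this
  have h1 : ∀ᶠ ε in nhds (0 : ℝ),
      D (ℓ + (1 + ε) * c) - D (ℓ - (1 + ε) * c) < L + δ / 4 :=
    hφ.eventually_lt_const (by linarith)
  have h2 : ∀ᶠ ε in nhds (0 : ℝ),
      L - δ / 4 < D (ℓ + (1 - ε) * c) - D (ℓ - (1 - ε) * c) :=
    hψ.eventually_const_lt (by linarith)
  obtain ⟨r, hr, hball⟩ := Metric.eventually_nhds_iff.mp (h1.and h2)
  set ε : ℝ := r / 2 with hεdef
  have hε : 0 < ε := by positivity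
  have hεr : dist ε (0 : ℝ) < r := by
    rw [Real.dist_eq, sub_zero, abs_of_pos hε]
    linarith
  obtain ⟨hφε, hψε⟩ := hball hεr
  -- choose N from hk
  obtain ⟨N₀, hN₀⟩ := Metric.tendsto_atTop.mp hk ε hε
  set N : ℕ := N₀ + 1 with hNdef
  have hkb : ∀ n : ℕ, N ≤ n →
      (1 - ε) * (c * n) < k n ∧ k n < (1 + ε) * (c * n) := by
    intro n hn
    have hn1 : 1 ≤ n := le_trans (Nat.le_add_left 1 N₀) hn
    have hnpos : (0 : ℝ) < c * n := by
      have : (0 : ℝ) < (n : ℝ) := by exact_mod_cast hn1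
      positivity
    have := hN₀ n (le_trans (Nat.le_add_right N₀ 1) hn)
    rw [Real.dist_eq, abs_lt] at this
    constructor
    · exact (lt_div_iff₀ hnpos).mp (by linarith)
    · exact (div_lt_iff₀ hnpos).mp (by linarith)
  -- notation
  set uP : ℝ := ℓ + (1 + ε) * c with hup
  set uM : ℝ := ℓ - (1 + ε) * c with hum
  set vP : ℝ := ℓ + (1 - ε) * c with hvp
  set vM : ℝ := ℓ - (1 - ε) * c with hvm
  -- the two counting inequalities
  have key1 : ∀ x : ℝ,
      ({n : ℕ | 1 ≤ n ∧ (n : ℝ) ≤ x ∧ |(sigma1 n : ℝ) - ℓ * n| < k n}.ncard)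
        + ({n : ℕ | 1 ≤ n ∧ (n : ℝ) ≤ x ∧ (sigma1 n : ℝ) ≤ uM * n}.ncard)
      ≤ ({n : ℕ | 1 ≤ n ∧ (n : ℝ) ≤ x ∧ (sigma1 n : ℝ) ≤ uP * n}.ncard) + N := by
    intro x
    apply count_upper _ _ _ _ (finite_aux _ x) (finite_aux _ x) (finite_aux _ x)
    · rintro n ⟨hn1, hnx, hnW⟩ hnN
      refine ⟨hn1, hnx, ?_⟩
      rw [abs_lt] at hnW
      have := (hkb n hnN).2
      nlinarith
    · rintro n ⟨hn1, hnx, hnW⟩ hnN ⟨_, _, hle⟩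
      rw [abs_lt] at hnW
      have := (hkb n hnN).2
      nlinarith
    · rintro n ⟨hn1, hnx, hle⟩
      refine ⟨hn1, hnx, ?_⟩
      have hn0 : (0 : ℝ) ≤ (n : ℝ) := Nat.cast_nonneg n
      have h12 : uM ≤ uP := by rw [hum, hup]; nlinarith
      linarith [mul_le_mul_of_nonneg_right h12 hn0]
  have key2 : ∀ x : ℝ,
      ({n : ℕ | 1 ≤ n ∧ (n : ℝ) ≤ x ∧ (sigma1 n : ℝ) ≤ vP * n}.ncard)
      ≤ ({n : ℕ | 1 ≤ n ∧ (n : ℝ) ≤ x ∧ |(sigma1 n : ℝ) - ℓ * n| < k n}.ncard)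
        + ({n : ℕ | 1 ≤ n ∧ (n : ℝ) ≤ x ∧ (sigma1 n : ℝ) ≤ vM * n}.ncard) + N := by
    intro x
    apply count_lower _ _ _ _ (finite_aux _ x) (finite_aux _ x) (finite_aux _ x)
    rintro n ⟨hn1, hnx, hle⟩ hnN
    by_cases hcase : (sigma1 n : ℝ) ≤ vM * n
    · exact Or.inr ⟨hn1, hnx, hcase⟩
    · left
      refine ⟨hn1, hnx, ?_⟩
      push_neg at hcase
      rw [abs_lt]
      have := (hkb n hnN).1
      constructor <;> nlinarith
  -- limit facts
  have hN0 : Filter.Tendsto (fun x : ℝ => (N : ℝ) / x) Filter.atTop (nhds 0) :=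
    tendsto_const_nhds.div_atTop Filter.tendsto_id
  have hU : Filter.Tendsto (fun x : ℝ =>
      ({n : ℕ | 1 ≤ n ∧ (n : ℝ) ≤ x ∧ (sigma1 n : ℝ) ≤ uP * n}.ncard : ℝ) / x
      - ({n : ℕ | 1 ≤ n ∧ (n : ℝ) ≤ x ∧ (sigma1 n : ℝ) ≤ uM * n}.ncard : ℝ) / x
      + (N : ℝ) / x) Filter.atTop (nhds (D uP - D uM + 0)) :=
    ((hD uP).sub (hD uM)).add hN0
  have hUb : ∀ᶠ x : ℝ in Filter.atTop,
      ({n : ℕ | 1 ≤ n ∧ (n : ℝ) ≤ x ∧ (sigma1 n : ℝ) ≤ uP * n}.ncard : ℝ) / x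
      - ({n : ℕ | 1 ≤ n ∧ (n : ℝ) ≤ x ∧ (sigma1 n : ℝ) ≤ uM * n}.ncard : ℝ) / x
      + (N : ℝ) / x < L + δ / 2 :=
    hU.eventually_lt_const (by simp only [hup, hum]; linarith)
  have hV : Filter.Tendsto (fun x : ℝ =>
      ({n : ℕ | 1 ≤ n ∧ (n : ℝ) ≤ x ∧ (sigma1 n : ℝ) ≤ vP * n}.ncard : ℝ) / x
      - ({n : ℕ | 1 ≤ n ∧ (n : ℝ) ≤ x ∧ (sigma1 n : ℝ) ≤ vM * n}.ncard : ℝ) / x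
      - (N : ℝ) / x) Filter.atTop (nhds (D vP - D vM - 0)) :=
    ((hD vP).sub (hD vM)).sub hN0
  have hVb : ∀ᶠ x : ℝ in Filter.atTop,
      L - δ / 2 <
      ({n : ℕ | 1 ≤ n ∧ (n : ℝ) ≤ x ∧ (sigma1 n : ℝ) ≤ vP * n}.ncard : ℝ) / x
      - ({n : ℕ | 1 ≤ n ∧ (n : ℝ) ≤ x ∧ (sigma1 n : ℝ) ≤ vM * n}.ncard : ℝ) / x
      - (N : ℝ) / x :=
    hV.eventually_const_lt (by simp only [hvp, hvm]; linarith)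
  filter_upwards [hUb, hVb, Filter.eventually_gt_atTop (0 : ℝ)] with x hub hvb hx
  rw [Real.dist_eq, abs_lt]
  have hk1 := key1 x
  have hk2 := key2 x
  have hk1' : (({n : ℕ | 1 ≤ n ∧ (n : ℝ) ≤ x ∧ |(sigma1 n : ℝ) - ℓ * n| < k n}.ncard : ℝ))
      + ({n : ℕ | 1 ≤ n ∧ (n : ℝ) ≤ x ∧ (sigma1 n : ℝ) ≤ uM * n}.ncard : ℝ)
      ≤ ({n : ℕ | 1 ≤ n ∧ (n : ℝ) ≤ x ∧ (sigma1 n : ℝ) ≤ uP * n}.ncard : ℝ) + N := by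
    exact_mod_cast hk1
  have hk2' : ({n : ℕ | 1 ≤ n ∧ (n : ℝ) ≤ x ∧ (sigma1 n : ℝ) ≤ vP * n}.ncard : ℝ)
      ≤ ({n : ℕ | 1 ≤ n ∧ (n : ℝ) ≤ x ∧ |(sigma1 n : ℝ) - ℓ * n| < k n}.ncard : ℝ)
        + ({n : ℕ | 1 ≤ n ∧ (n : ℝ) ≤ x ∧ (sigma1 n : ℝ) ≤ vM * n}.ncard : ℝ) + N := by
    exact_mod_cast hk2
  have i1 : (({n : ℕ | 1 ≤ n ∧ (n : ℝ) ≤ x ∧ |(sigma1 n : ℝ) - ℓ * n| < k n}.ncard : ℝ)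
      + ({n : ℕ | 1 ≤ n ∧ (n : ℝ) ≤ x ∧ (sigma1 n : ℝ) ≤ uM * n}.ncard : ℝ)) / x
      ≤ (({n : ℕ | 1 ≤ n ∧ (n : ℝ) ≤ x ∧ (sigma1 n : ℝ) ≤ uP * n}.ncard : ℝ) + (N : ℝ)) / x :=
    div_le_div_of_nonneg_right' hk1' hx
  have i2 : ({n : ℕ | 1 ≤ n ∧ (n : ℝ) ≤ x ∧ (sigma1 n : ℝ) ≤ vP * n}.ncard : ℝ) / x
      ≤ (({n : ℕ | 1 ≤ n ∧ (n : ℝ) ≤ x ∧ |(sigma1 n : ℝ) - ℓ * n| < k n}.ncard : ℝ)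
      + ({n : ℕ | 1 ≤ n ∧ (n : ℝ) ≤ x ∧ (sigma1 n : ℝ) ≤ vM * n}.ncard : ℝ) + (N : ℝ)) / x :=
    div_le_div_of_nonneg_right' hk2' hx
  rw [add_div, add_div] at i1 i2
  constructor
  · linarith
  · linarith
end

section
/- Let ℓ > 1 be real and let k : ℕ → (0,∞) satisfy n/k(n) → 0 as n → ∞. Then the set W(ℓ;k) = {n ∈ ℕ : |σ(n) − ℓ·n| < k(n)} has asymptotic density 1, i.e., (1/x)·#{n ≤ x : |σ(n) − ℓ·n| < k(n)} → 1 as x → ∞. -/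
lemma aux_sq_sum (N : ℕ) : ∑ d ∈ Finset.Ioc 0 N, (1:ℝ)/(d:ℝ)^2 ≤ 2 - 2/(N+1) := by
  induction N with
  | zero => simp
  | succ n ih =>
    rw [Finset.sum_Ioc_succ_top (Nat.zero_le _)]
    have h1 : (0:ℝ) < n + 1 := by positivity
    have h2 : (0:ℝ) < n + 2 := by positivity
    have key : (1:ℝ)/((n:ℝ)+1)^2 ≤ 2/(n+1) - 2/(n+2) := by
      rw [div_sub_div _ _ (ne_of_gt h1) (ne_of_gt h2), div_le_div_iff₀ (by positivity) (by positivity)]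
      nlinarith
    push_cast
    push_cast at ih
    have e : ((n:ℝ)+1+1) = (n:ℝ)+2 := by ring
    rw [e]
    linarith

lemma aux_divisors_eq (N n : ℕ) (hn : 0 < n) (hnN : n ≤ N) :
    n.divisors = (Finset.Ioc 0 N).filter (fun d => d ∣ n) := by
  ext d
  simp only [Nat.mem_divisors, Finset.mem_filter, Finset.mem_Ioc]
  constructor
  · rintro ⟨hd, -⟩
    exact ⟨⟨Nat.pos_of_dvd_of_pos hd hn, le_trans (Nat.le_of_dvd hn hd) hnN⟩, hd⟩
  · rintro ⟨-, hd⟩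
    exact ⟨hd, hn.ne'⟩

lemma aux_sigma_div (n : ℕ) (hn : 0 < n) :
    (sigma1 n : ℝ) / n = ∑ d ∈ n.divisors, (1:ℝ)/(d:ℝ) := by
  have hnat : sigma1 n = ∑ d ∈ n.divisors, n / d := by
    rw [sigma1, ArithmeticFunction.sigma_one_apply]
    simpa using (Nat.sum_div_divisors n id).symm
  have h : (sigma1 n : ℝ) = ∑ d ∈ n.divisors, ((n:ℝ)/(d:ℝ)) := by
    rw [hnat]
    push_cast
    refine Finset.sum_congr rfl fun d hd => ?_
    rw [Nat.cast_div (Nat.mem_divisors.mp hd).1 (by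
      exact_mod_cast (Nat.pos_of_mem_divisors hd).ne')]
  rw [h, Finset.sum_div]
  refine Finset.sum_congr rfl fun d hd => ?_
  rw [div_div, mul_comm, ← div_div]
  congr 1
  rw [div_self (by exact_mod_cast hn.ne')]

lemma aux_sum_bound (N : ℕ) :
    ∑ n ∈ Finset.Ioc 0 N, (sigma1 n : ℝ) / n ≤ 2 * N := by
  have h1 : ∑ n ∈ Finset.Ioc 0 N, (sigma1 n : ℝ) / n
      = ∑ d ∈ Finset.Ioc 0 N, ((N / d : ℕ) : ℝ) * (1/(d:ℝ)) := by
    have h2 : ∀ n ∈ Finset.Ioc 0 N, (sigma1 n : ℝ) / n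
        = ∑ d ∈ Finset.Ioc 0 N, if d ∣ n then (1:ℝ)/(d:ℝ) else 0 := by
      intro n hn
      rw [Finset.mem_Ioc] at hn
      rw [aux_sigma_div n hn.1, aux_divisors_eq N n hn.1 hn.2, Finset.sum_filter]
    rw [Finset.sum_congr rfl h2, Finset.sum_comm]
    refine Finset.sum_congr rfl fun d hd => ?_
    rw [← Finset.sum_filter, Finset.sum_const, Nat.Ioc_filter_dvd_card_eq_div,
      nsmul_eq_mul]
  rw [h1]
  have h3 : ∑ d ∈ Finset.Ioc 0 N, ((N / d : ℕ) : ℝ) * (1/(d:ℝ))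
      ≤ ∑ d ∈ Finset.Ioc 0 N, (N:ℝ) * (1/(d:ℝ)^2) := by
    refine Finset.sum_le_sum fun d hd => ?_
    rw [Finset.mem_Ioc] at hd
    have hd0 : (0:ℝ) < d := by exact_mod_cast hd.1
    have : ((N / d : ℕ) : ℝ) ≤ (N:ℝ) / d := Nat.cast_div_le
    calc ((N / d : ℕ) : ℝ) * (1/(d:ℝ)) ≤ ((N:ℝ)/d) * (1/(d:ℝ)) := by
          apply mul_le_mul_of_nonneg_right this (by positivity)
      _ = (N:ℝ) * (1/(d:ℝ)^2) := by rw [div_mul_div_comm, mul_one, mul_one_div, sq]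
  rw [← Finset.mul_sum] at h3
  have h4 := aux_sq_sum N
  have hN0 : (0:ℝ) ≤ N := Nat.cast_nonneg N
  have h5 : (0:ℝ) ≤ 2/((N:ℝ)+1) := by positivity
  nlinarith

lemma aux_markov (N : ℕ) (B : ℝ) (hB : 0 < B) :
    (((Finset.Ioc 0 N).filter (fun n => B * n ≤ (sigma1 n : ℝ))).card : ℝ) * B ≤ 2 * N := by
  set S := (Finset.Ioc 0 N).filter (fun n => B * n ≤ (sigma1 n : ℝ)) with hS
  have h1 : (S.card : ℝ) * B = ∑ _n ∈ S, B := by rw [Finset.sum_const, nsmul_eq_mul]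
  rw [h1]
  have h2 : ∑ _n ∈ S, B ≤ ∑ n ∈ S, (sigma1 n : ℝ) / n := by
    refine Finset.sum_le_sum fun n hn => ?_
    rw [hS, Finset.mem_filter, Finset.mem_Ioc] at hn
    have hn0 : (0:ℝ) < n := by exact_mod_cast hn.1.1
    rw [le_div_iff₀ hn0]
    exact hn.2
  have h3 : ∑ n ∈ S, (sigma1 n : ℝ) / n ≤ ∑ n ∈ Finset.Ioc 0 N, (sigma1 n : ℝ) / n := by
    apply Finset.sum_le_sum_of_subset_of_nonneg (Finset.filter_subset _ _)
    intro n _ _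
    positivity
  exact le_trans h2 (le_trans h3 (aux_sum_bound N))

theorem stmt_5 (ℓ : ℝ) (hℓ : 1 < ℓ) (k : ℕ → ℝ) (hkpos : ∀ n : ℕ, 0 < k n)
    (hk : Filter.Tendsto (fun n : ℕ => (n : ℝ) / k n) Filter.atTop (nhds 0)) :
    Filter.Tendsto (fun x : ℝ =>
        ({n : ℕ | 1 ≤ n ∧ (n : ℝ) ≤ x ∧ |(sigma1 n : ℝ) - ℓ * n| < k n}.ncard : ℝ) / x)
      Filter.atTop (nhds 1) := by
  rw [Metric.tendsto_atTop]
  intro ε hε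
  set B : ℝ := 4 / ε with hBdef
  have hB : 0 < B := by positivity
  have hBℓ : 0 < B + ℓ := by linarith
  -- choose N₀ from hk
  have hev : ∀ᶠ n : ℕ in Filter.atTop, (n : ℝ) / k n < 1 / (B + ℓ) := by
    have := hk.eventually (gt_mem_nhds (show (0:ℝ) < 1/(B+ℓ) by positivity))
    exact this
  obtain ⟨M, hM⟩ := Filter.eventually_atTop.mp hev
  refine ⟨max 1 (2 * ((M:ℝ) + 1) / ε + 1), fun x hx => ?_⟩
  have hx1 : (1:ℝ) ≤ x := le_trans (le_max_left _ _) hx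
  have hx0 : (0:ℝ) < x := lt_of_lt_of_le one_pos hx1
  have hxM : 2 * ((M:ℝ) + 1) / ε + 1 ≤ x := le_trans (le_max_right _ _) hx
  set N : ℕ := ⌊x⌋₊ with hNdef
  have hNx : (N : ℝ) ≤ x := Nat.floor_le (le_of_lt hx0)
  have hxN : x < (N : ℝ) + 1 := Nat.lt_floor_add_one x
  set P : ℕ → Prop := fun n => |(sigma1 n : ℝ) - ℓ * n| < k n with hP
  have hPdec : DecidablePred P := fun n => Real.decidableLT _ _
  set G : Finset ℕ := (Finset.Ioc 0 N).filter P with hG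
  -- the set equals ↑G
  have hset : {n : ℕ | 1 ≤ n ∧ (n : ℝ) ≤ x ∧ |(sigma1 n : ℝ) - ℓ * n| < k n} = ↑G := by
    ext n
    simp only [Set.mem_setOf_eq, hG, Finset.coe_filter, Finset.mem_Ioc, Set.mem_setOf_eq, hP]
    constructor
    · rintro ⟨h1, h2, h3⟩
      exact ⟨⟨h1, Nat.le_floor h2⟩, h3⟩
    · rintro ⟨⟨h1, h2⟩, h3⟩
      exact ⟨h1, le_trans (show (n:ℝ) ≤ N by exact_mod_cast h2) hNx, h3⟩
  rw [hset, Set.ncard_coe_finset]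
  -- upper bound
  have hGN : G.card ≤ N := le_trans (Finset.card_filter_le _ _) (by simp [Nat.card_Ioc])
  have hup : (G.card : ℝ) / x ≤ 1 := by
    rw [div_le_one hx0]
    exact le_trans (by exact_mod_cast hGN) hNx
  -- bad set
  set S : Finset ℕ := (Finset.Ioc 0 N).filter (fun n => B * n ≤ (sigma1 n : ℝ)) with hSdef
  have hsub : Finset.Ioc 0 N ⊆ G ∪ S ∪ Finset.Ioc 0 M := by
    intro n hn
    have hn' := Finset.mem_Ioc.mp hn
    by_cases hnM : n ≤ M
    · exact Finset.mem_union_right _ (Finset.mem_Ioc.mpr ⟨hn'.1, hnM⟩)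
    · push_neg at hnM
      by_cases hBn : B * n ≤ (sigma1 n : ℝ)
      · exact Finset.mem_union_left _ (Finset.mem_union_right _
          (Finset.mem_filter.mpr ⟨hn, hBn⟩))
      · push_neg at hBn
        refine Finset.mem_union_left _ (Finset.mem_union_left _
          (Finset.mem_filter.mpr ⟨hn, ?_⟩))
        have hkn := hkpos n
        have hnk := hM n (le_of_lt hnM)
        have hn1 : (1:ℝ) ≤ n := by exact_mod_cast hn'.1
        have hlt : (B + ℓ) * n < k n := by
          rw [div_lt_div_iff₀ hkn hBℓ] at hnk
          linarith
        have hσ : (0:ℝ) ≤ (sigma1 n : ℝ) := Nat.cast_nonneg _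
        show |(sigma1 n : ℝ) - ℓ * n| < k n
        rw [abs_lt]
        constructor <;> nlinarith
  -- card inequality
  have hcardN : N ≤ G.card + S.card + M := by
    calc N = (Finset.Ioc 0 N).card := by simp [Nat.card_Ioc]
      _ ≤ (G ∪ S ∪ Finset.Ioc 0 M).card := Finset.card_le_card hsub
      _ ≤ (G ∪ S).card + (Finset.Ioc 0 M).card := Finset.card_union_le _ _
      _ ≤ G.card + S.card + (Finset.Ioc 0 M).card := by
          exact Nat.add_le_add_right (Finset.card_union_le _ _) _
      _ = G.card + S.card + M := by simp [Nat.card_Ioc]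
  have hcardR : (N:ℝ) ≤ (G.card:ℝ) + S.card + M := by exact_mod_cast hcardN
  -- Markov bound on S
  have hmar := aux_markov N B hB
  have hSb : (S.card:ℝ) ≤ ε * N / 2 := by
    have h2 := mul_le_mul_of_nonneg_right hmar hε.le
    have h3 : ((S.card:ℝ) * B) * ε = S.card * 4 := by
      rw [hBdef]; field_simp
    rw [h3] at h2
    have hN0 : (0:ℝ) ≤ N := Nat.cast_nonneg _
    nlinarith
  -- eps * x lower bound
  have hεx : 2*((M:ℝ)+1) + ε ≤ ε * x := by
    have h := mul_le_mul_of_nonneg_left hxM hε.le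
    have h' : ε * (2 * ((M:ℝ) + 1) / ε + 1) = 2*((M:ℝ)+1) + ε := by
      field_simp
    rw [h'] at h
    exact h
  -- lower bound on G.card / x
  have hlow : 1 - ε < (G.card : ℝ) / x := by
    rw [lt_div_iff₀ hx0]
    have hNx1 : x - 1 ≤ (N:ℝ) := by linarith
    nlinarith
  rw [Real.dist_eq, abs_lt]
  constructor <;> linarith
end

section
/- Let a, b, k be positive integers such that ab divides k and σ(k/a) = k/b, and let p be a prime with p ∤ (k/a). Then n := p·(k/a) satisfies b·σ(n) = a·n + k. -/
theorem stmt_10 (a b k : ℕ) (ha : 0 < a) (hb : 0 < b) (hk : 0 < k)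
    (hdvd : a * b ∣ k) (hsig : sigma1 (k / a) = k / b)
    (p : ℕ) (hp : p.Prime) (hpm : ¬ p ∣ (k / a)) :
    b * sigma1 (p * (k / a)) = a * (p * (k / a)) + k := by
  have hak : a ∣ k := dvd_trans ⟨b, rfl⟩ hdvd
  have hbk : b ∣ k := dvd_trans (dvd_mul_left b a) hdvd
  have hcop : Nat.Coprime p (k / a) := (Nat.Prime.coprime_iff_not_dvd hp).mpr hpm
  have hmul : sigma1 (p * (k / a)) = sigma1 p * sigma1 (k / a) :=
    ArithmeticFunction.isMultiplicative_sigma.map_mul_of_coprime hcop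
  have hsp : sigma1 p = p + 1 := by
    simp [sigma1, ArithmeticFunction.sigma_one_apply, hp.divisors]
    rw [Finset.sum_pair hp.one_lt.ne, add_comm]
  have h1 : b * (k / b) = k := Nat.mul_div_cancel' hbk
  have h2 : a * (k / a) = k := Nat.mul_div_cancel' hak
  calc b * sigma1 (p * (k / a)) = (p + 1) * (b * (k / b)) := by
        rw [hmul, hsp, hsig]; ring
    _ = p * k + k := by rw [h1]; ring
    _ = a * (p * (k / a)) + k := by rw [mul_left_comm, h2]
end

section
/- For every function f : ℕ → ℝ with f(m) → ∞ as m → ∞, there exist an irrational real number ℓ > 1 and a strictly increasing sequence m₁ < m₂ < m₃ < ⋯ of positive integers such that |ℓ − σ(m_i)/m_i| < 1/f(m_i) for every i ≥ 1. -/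
open Filter ArithmeticFunction
open scoped Classical

namespace Stmt15

noncomputable def nextP (n : ℕ) : ℕ := (Nat.exists_infinite_primes n).choose

lemma nextP_prime (n : ℕ) : (nextP n).Prime := (Nat.exists_infinite_primes n).choose_spec.2
lemma le_nextP (n : ℕ) : n ≤ nextP n := (Nat.exists_infinite_primes n).choose_spec.1

variable (f : ℕ → ℝ)

noncomputable def Nf (k : ℕ) : ℕ :=
  if h : ∃ N, ∀ m, N ≤ m → (k : ℝ) + 1 ≤ f m then h.choose else 0

lemma Nf_spec (hf : Tendsto f atTop atTop) (k m : ℕ) (hm : Nf f k ≤ m) :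
    (k : ℝ) + 1 ≤ f m := by
  have h : ∃ N, ∀ m, N ≤ m → (k : ℝ) + 1 ≤ f m := by
    have := (hf.eventually_ge_atTop ((k : ℝ) + 1))
    rw [eventually_atTop] at this
    obtain ⟨N, hN⟩ := this
    exact ⟨N, hN⟩
  rw [Nf, dif_pos h] at hm
  exact h.choose_spec m hm

/-- state: (current prime, current product) -/
noncomputable def seq : ℕ → ℕ × ℕ
  | 0 => (nextP (max 4 (Nf f 0)), nextP (max 4 (Nf f 0)))
  | k + 1 =>
    let s := seq k
    let q := nextP (max (2 * s.1 + 1) (max (Nf f (k + 1))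
      (⌈(2 : ℝ) ^ (k + 3) * max (f s.2) (((k : ℝ) + 1) * s.2)⌉₊ + 1)))
    (q, s.2 * q)

noncomputable def P (k : ℕ) : ℕ := (seq f k).1
noncomputable def M (k : ℕ) : ℕ := (seq f k).2

lemma P_prime (k : ℕ) : (P f k).Prime := by
  cases k with
  | zero => exact nextP_prime _
  | succ k => exact nextP_prime _

lemma M_zero : M f 0 = P f 0 := rfl
lemma M_succ (k : ℕ) : M f (k + 1) = M f k * P f (k + 1) := rfl

lemma P_bound (k : ℕ) : 2 * P f k + 1 ≤ P f (k + 1) :=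
  le_trans (le_max_left _ _) (le_nextP _)

lemma Nf_le_P : ∀ k, Nf f k ≤ P f k
  | 0 => le_trans (le_max_right _ _) (le_nextP _)
  | k + 1 => le_trans (le_trans (le_max_left _ _) (le_max_right _ _)) (le_nextP _)

lemma ceil_le_P (k : ℕ) :
    (2 : ℝ) ^ (k + 3) * max (f (M f k)) (((k : ℝ) + 1) * M f k) ≤ P f (k + 1) := by
  have h1 : ⌈(2 : ℝ) ^ (k + 3) * max (f (M f k)) (((k : ℝ) + 1) * M f k)⌉₊ + 1 ≤ P f (k + 1) :=
    le_trans (le_trans (le_max_right _ _) (le_max_right _ _)) (le_nextP _)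
  calc (2 : ℝ) ^ (k + 3) * max (f (M f k)) (((k : ℝ) + 1) * M f k)
      ≤ (⌈(2 : ℝ) ^ (k + 3) * max (f (M f k)) (((k : ℝ) + 1) * M f k)⌉₊ : ℝ) := Nat.le_ceil _
    _ ≤ ((⌈(2 : ℝ) ^ (k + 3) * max (f (M f k)) (((k : ℝ) + 1) * M f k)⌉₊ + 1 : ℕ) : ℝ) := by
        push_cast; linarith
    _ ≤ P f (k + 1) := by exact_mod_cast h1

lemma four_le_P : ∀ k, 4 ≤ P f k
  | 0 => le_trans (le_max_left _ _) (le_nextP _)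
  | k + 1 => by have := P_bound f k; have := four_le_P k; omega

lemma pow_le_P : ∀ k, 2 ^ (k + 2) ≤ P f k
  | 0 => four_le_P f 0
  | k + 1 => by
      have h1 := P_bound f k
      have h2 := pow_le_P k
      have : 2 ^ (k + 1 + 2) = 2 * 2 ^ (k + 2) := by ring
      omega

lemma P_pos (k : ℕ) : 0 < P f k := (P_prime f k).pos

lemma M_pos : ∀ k, 0 < M f k
  | 0 => P_pos f 0
  | k + 1 => by rw [M_succ]; exact Nat.mul_pos (M_pos k) (P_pos f (k + 1))

lemma P_le_M : ∀ k, P f k ≤ M f k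
  | 0 => le_refl _
  | k + 1 => by
      rw [M_succ]
      exact Nat.le_mul_of_pos_left _ (M_pos f k)

lemma M_lt_M (k : ℕ) : M f k < M f (k + 1) := by
  rw [M_succ]
  have := (P_prime f (k + 1)).two_le
  have := M_pos f k
  nlinarith

lemma P_strictMono : StrictMono (P f) := by
  apply strictMono_nat_of_lt_succ
  intro k
  have := P_bound f k
  have := P_pos f k
  omega

lemma M_prod (k : ℕ) : M f k = ∏ i ∈ Finset.range (k + 1), P f i := by
  induction k with
  | zero => simp [M_zero]
  | succ k ih => rw [Finset.prod_range_succ, ← ih, M_succ]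

lemma coprime (k : ℕ) : (M f k).Coprime (P f (k + 1)) := by
  rw [M_prod]
  apply Nat.Coprime.prod_left
  intro i hi
  rw [Finset.mem_range] at hi
  have hne : P f i ≠ P f (k + 1) := by
    have : P f i < P f (k + 1) := P_strictMono f (by omega)
    omega
  exact (Nat.coprime_primes (P_prime f i) (P_prime f (k + 1))).mpr hne

lemma sigma1_prime {p : ℕ} (hp : p.Prime) : sigma1 p = p + 1 := by
  rw [sigma1, sigma_one_apply, hp.divisors, Finset.sum_pair hp.one_lt.ne]
  omega

lemma sigma1_mul (k : ℕ) :
    sigma1 (M f (k + 1)) = sigma1 (M f k) * (P f (k + 1) + 1) := by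
  rw [M_succ, sigma1, isMultiplicative_sigma.map_mul_of_coprime (coprime f k),
    ← sigma1, ← sigma1, sigma1_prime (P_prime f (k + 1))]

noncomputable def r (k : ℕ) : ℝ := (sigma1 (M f k) : ℝ) / (M f k)

lemma r_succ (k : ℕ) : r f (k + 1) = r f k * (1 + 1 / P f (k + 1)) := by
  have hM : (0 : ℝ) < M f k := by exact_mod_cast M_pos f k
  have hP : (0 : ℝ) < P f (k + 1) := by exact_mod_cast P_pos f (k + 1)
  rw [r, r, sigma1_mul, M_succ]
  push_cast
  field_simp

lemma one_le_r (k : ℕ) : 1 ≤ r f k := by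
  have hM : (0 : ℝ) < M f k := by exact_mod_cast M_pos f k
  rw [r, le_div_iff₀ hM, one_mul]
  have : M f k ≤ sigma1 (M f k) := by
    rw [sigma1, sigma_one_apply]
    exact Finset.single_le_sum (f := fun i => i) (fun i _ => Nat.zero_le i)
      (Nat.mem_divisors_self _ (M_pos f k).ne')
  exact_mod_cast this

lemma r_lt_succ (k : ℕ) : r f k < r f (k + 1) := by
  have hP : (0 : ℝ) < P f (k + 1) := by exact_mod_cast P_pos f (k + 1)
  have h1 := one_le_r f k
  rw [r_succ]
  nlinarith [one_div_pos.mpr hP]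

lemma r_mono : Monotone (r f) :=
  monotone_nat_of_le_succ (fun k => (r_lt_succ f k).le)

lemma r_le (k : ℕ) : r f k ≤ 2 - (1 / 2 : ℝ) ^ (k + 1) := by
  induction k with
  | zero =>
    have h4 : (4 : ℝ) ≤ P f 0 := by exact_mod_cast four_le_P f 0
    have hP : (0 : ℝ) < P f 0 := by linarith
    have : r f 0 = 1 + 1 / P f 0 := by
      rw [r, M_zero, sigma1_prime (P_prime f 0)]
      push_cast
      field_simp
    rw [this]
    have h14 : 1 / (P f 0 : ℝ) ≤ 1 / 4 :=
      div_le_div_of_nonneg_left (by norm_num) (by norm_num) h4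
    have hp : ((1:ℝ)/2)^(0+1) = 1/2 := by norm_num
    rw [hp]
    linarith
  | succ k ih =>
    have hPk : (2 : ℝ) ^ (k + 3) ≤ P f (k + 1) := by exact_mod_cast pow_le_P f (k + 1)
    have hP : (0 : ℝ) < P f (k + 1) := by exact_mod_cast P_pos f (k + 1)
    have hb : 1 / (P f (k + 1) : ℝ) ≤ (1 / 2) ^ (k + 3) := by
      rw [div_pow, one_pow]
      exact div_le_div_of_nonneg_left (by norm_num) (by positivity) hPk
    rw [r_succ]
    have h1 := one_le_r f k
    have ha : (0:ℝ) < (1/2:ℝ) ^ (k+1) := by positivity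
    have hfact : ((1:ℝ)/2) ^ (k+3) = (1/2)^(k+1) * (1/4) := by ring
    have hb' : 1 / (P f (k + 1) : ℝ) ≤ (1/2)^(k+1) * (1/4) := by rw [← hfact]; exact hb
    have hr2 : r f k ≤ 2 := by
      have : (0:ℝ) < (1/2:ℝ)^(k+1) := ha
      linarith
    have h0 : (0:ℝ) ≤ 1 / (P f (k+1) : ℝ) := by positivity
    have expand : r f k * (1 + 1 / P f (k + 1)) = r f k + r f k * (1 / P f (k+1)) := by ring
    rw [expand]
    have : r f k * (1 / P f (k+1)) ≤ 2 * ((1/2)^(k+1) * (1/4)) := by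
      apply mul_le_mul hr2 hb' h0 (by norm_num)
    have : r f (k) + r f k * (1 / P f (k+1)) ≤ 2 - (1/2)^(k+1) + 2 * ((1/2)^(k+1)*(1/4)) := by
      linarith
    have hgoal : 2 - (1/2:ℝ)^(k+1) + 2 * ((1/2)^(k+1)*(1/4)) = 2 - (1/2)^(k+1) * (1/2) := by ring
    have hpow : ((1:ℝ)/2)^(k+1+1) = (1/2)^(k+1) * (1/2) := by ring
    rw [hpow]
    linarith

lemma r_le_two (k : ℕ) : r f k ≤ 2 := by
  have := r_le f k
  have : (0:ℝ) < (1/2:ℝ)^(k+1) := by positivity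
  linarith

lemma P_geom (j : ℕ) : ∀ n, (2:ℝ) ^ n * P f (j + 1) ≤ P f (j + 1 + n) := by
  intro n
  induction n with
  | zero => simp
  | succ n ih =>
    have h := P_bound f (j + 1 + n)
    have h' : (2:ℝ) * P f (j + 1 + n) ≤ P f (j + 1 + n + 1) := by exact_mod_cast by omega
    have : (2:ℝ)^(n+1) * P f (j+1) = 2 * ((2:ℝ)^n * P f (j+1)) := by ring
    rw [this]
    calc 2 * ((2:ℝ)^n * P f (j+1)) ≤ 2 * P f (j + 1 + n) := by linarith
      _ ≤ P f (j + 1 + n + 1) := h'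
    
lemma tail_bound (j : ℕ) : ∀ n, r f (j + n) ≤ r f j + 4 / P f (j + 1) * (1 - (1/2:ℝ) ^ n) := by
  intro n
  induction n with
  | zero => simp
  | succ n ih =>
    have hP1 : (0:ℝ) < P f (j + 1) := by exact_mod_cast P_pos f (j + 1)
    have hPn : (0:ℝ) < P f (j + n + 1) := by exact_mod_cast P_pos f (j + n + 1)
    have hgeom : (2:ℝ) ^ n * P f (j + 1) ≤ P f (j + 1 + n) := P_geom f j n
    have heq : j + 1 + n = j + n + 1 := by omega
    rw [heq] at hgeom
    have key : 1 / (P f (j + n + 1) : ℝ) ≤ (1/2)^n * (1 / P f (j+1)) := by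
      rw [div_le_iff₀ hPn]
      have h2 : (0:ℝ) < (2:ℝ)^n := by positivity
      have : ((1:ℝ)/2)^n * (1 / P f (j+1)) * P f (j+n+1) = (P f (j+n+1) : ℝ) / ((2:ℝ)^n * P f (j+1)) := by
        rw [div_pow, one_pow]
        field_simp
      rw [this, le_div_iff₀ (by positivity), one_mul]
      exact hgeom
    have hjn : j + (n + 1) = (j + n) + 1 := by omega
    rw [hjn, r_succ]
    have expand : r f (j+n) * (1 + 1 / P f (j+n+1)) = r f (j+n) + r f (j+n) * (1 / P f (j+n+1)) := by ring
    rw [expand]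
    have hr2 := r_le_two f (j + n)
    have h0 : (0:ℝ) ≤ 1 / (P f (j+n+1) : ℝ) := by positivity
    have hrm : r f (j+n) * (1 / P f (j+n+1)) ≤ 2 * ((1/2)^n * (1 / P f (j+1))) := by
      apply mul_le_mul hr2 key h0 (by norm_num)
    have : r f (j+n) + r f (j+n) * (1 / P f (j+n+1)) ≤
        r f j + 4 / P f (j+1) * (1 - (1/2)^n) + 2 * ((1/2)^n * (1 / P f (j+1))) := by linarith
    have hcomp : r f j + 4 / (P f (j+1):ℝ) * (1 - (1/2)^n) + 2 * ((1/2)^n * (1 / P f (j+1))) =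
        r f j + 4 / P f (j+1) * (1 - (1/2)^n * (1/2)) := by
      field_simp
      ring
    have hpow : ((1:ℝ)/2)^(n+1) = (1/2)^n * (1/2) := by ring
    rw [hpow]
    linarith [hcomp ▸ this]

noncomputable def L : ℝ := ⨆ k, r f k

lemma r_bddAbove : BddAbove (Set.range (r f)) :=
  ⟨2, by rintro x ⟨k, rfl⟩; exact r_le_two f k⟩

lemma r_le_L (k : ℕ) : r f k ≤ L f := le_ciSup (r_bddAbove f) k

lemma L_le (j : ℕ) : L f ≤ r f j + 4 / P f (j + 1) := by
  apply ciSup_le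
  intro n
  rcases le_total n j with h | h
  · have := r_mono f h
    have hP : (0:ℝ) < P f (j+1) := by exact_mod_cast P_pos f (j+1)
    have : (0:ℝ) ≤ 4 / P f (j+1) := by positivity
    linarith [r_mono f h]
  · obtain ⟨n', rfl⟩ := Nat.exists_eq_add_of_le h
    have := tail_bound f j n'
    have hP : (0:ℝ) < P f (j+1) := by exact_mod_cast P_pos f (j+1)
    have hpow : (0:ℝ) ≤ (1/2:ℝ)^n' := by positivity
    have h4 : (0:ℝ) < 4 / (P f (j+1):ℝ) := by positivity
    nlinarith

lemma r_lt_L (k : ℕ) : r f k < L f :=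
  lt_of_lt_of_le (r_lt_succ f k) (r_le_L f (k + 1))

lemma L_sub_r (j : ℕ) :
    L f - r f j ≤ 4 / ((2:ℝ) ^ (j + 3) * max (f (M f j)) (((j : ℝ) + 1) * M f j)) ∧
    0 < L f - r f j := by
  constructor
  · have h1 := L_le f j
    have h2 := ceil_le_P f j
    have hP : (0:ℝ) < P f (j+1) := by exact_mod_cast P_pos f (j+1)
    have hM : (0:ℝ) < M f j := by exact_mod_cast M_pos f j
    have hmaxpos : (0:ℝ) < max (f (M f j)) (((j : ℝ) + 1) * M f j) := by
      apply lt_max_of_lt_right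
      positivity
    have hden : (0:ℝ) < (2:ℝ) ^ (j + 3) * max (f (M f j)) (((j : ℝ) + 1) * M f j) := by positivity
    have : 4 / (P f (j+1):ℝ) ≤ 4 / ((2:ℝ)^(j+3) * max (f (M f j)) (((j : ℝ) + 1) * M f j)) :=
      div_le_div_of_nonneg_left (by norm_num) hden h2
    linarith
  · linarith [r_lt_L f j]

end Stmt15

theorem stmt_15 (f : ℕ → ℝ) (hf : Filter.Tendsto f Filter.atTop Filter.atTop) :
    ∃ ℓ : ℝ, Irrational ℓ ∧ 1 < ℓ ∧ ∃ m : ℕ → ℕ, StrictMono m ∧ (∀ i : ℕ, 0 < m i) ∧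
      ∀ i : ℕ, |ℓ - (sigma1 (m i) : ℝ) / (m i)| < 1 / f (m i) := by
  classical
  have hfM : ∀ j : ℕ, (j : ℝ) + 1 ≤ f (Stmt15.M f j) := fun j =>
    Stmt15.Nf_spec f hf j _ (le_trans (Stmt15.Nf_le_P f j) (Stmt15.P_le_M f j))
  have hfMpos : ∀ j, (0 : ℝ) < f (Stmt15.M f j) := fun j =>
    lt_of_lt_of_le (by positivity) (hfM j)
  have hMpos : ∀ j, (0 : ℝ) < (Stmt15.M f j : ℝ) := fun j => by
    exact_mod_cast Stmt15.M_pos f j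
  refine ⟨Stmt15.L f, ?_, ?_, Stmt15.M f, strictMono_nat_of_lt_succ (Stmt15.M_lt_M f),
    fun i => Stmt15.M_pos f i, ?_⟩
  · -- Irrationality
    intro ⟨q, hq⟩
    set j := q.den with hj
    have hb : (0 : ℝ) < (q.den : ℝ) := by exact_mod_cast q.pos
    obtain ⟨hup, hpos⟩ := Stmt15.L_sub_r f j
    -- upper bound
    have hmaxge : ((j : ℝ) + 1) * Stmt15.M f j ≤ max (f (Stmt15.M f j)) (((j : ℝ) + 1) * Stmt15.M f j) :=
      le_max_right _ _
    have hjM : (0:ℝ) < ((j:ℝ)+1) * Stmt15.M f j := mul_pos (by positivity) (hMpos j)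
    have hpow8 : (8:ℝ) ≤ (2:ℝ) ^ (j + 3) := by
      calc (8:ℝ) = 2 ^ 3 := by norm_num
        _ ≤ 2 ^ (j + 3) := by
          apply pow_le_pow_right₀ (by norm_num); omega
    have hden1 : (8:ℝ) * (((j:ℝ)+1) * Stmt15.M f j) ≤
        (2:ℝ) ^ (j + 3) * max (f (Stmt15.M f j)) (((j : ℝ) + 1) * Stmt15.M f j) := by
      have h1 : (0:ℝ) < max (f (Stmt15.M f j)) (((j : ℝ) + 1) * Stmt15.M f j) :=
        lt_of_lt_of_le hjM hmaxge
      nlinarith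
    have hup2 : Stmt15.L f - Stmt15.r f j ≤ 4 / ((8:ℝ) * (((j:ℝ)+1) * Stmt15.M f j)) := by
      refine le_trans hup (div_le_div_of_nonneg_left (by norm_num) (by nlinarith) hden1)
    have hupstrict : Stmt15.L f - Stmt15.r f j < 1 / ((q.den : ℝ) * Stmt15.M f j) := by
      have h1 : 4 / ((8:ℝ) * (((j:ℝ)+1) * Stmt15.M f j)) < 1 / ((q.den : ℝ) * Stmt15.M f j) := by
        rw [div_lt_div_iff₀ (by nlinarith) (mul_pos hb (hMpos j))]
        have : (q.den : ℝ) = (j : ℝ) := by rw [hj]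
        rw [this]
        nlinarith [hMpos j, hb]
      linarith
    -- lower bound
    have hr : Stmt15.r f j = (sigma1 (Stmt15.M f j) : ℝ) / (Stmt15.M f j) := rfl
    have hqd : (q : ℝ) = (q.num : ℝ) / (q.den : ℝ) := by
      rw [Rat.cast_def]
    have hdiffpos : (0:ℝ) < (q.num : ℝ) * Stmt15.M f j - (q.den : ℝ) * sigma1 (Stmt15.M f j) := by
      have := hpos
      rw [← hq, hqd, hr] at this
      have h2 : (0:ℝ) < (q.den : ℝ) * Stmt15.M f j := mul_pos hb (hMpos j)
      have h3 : ((q.num:ℝ) / q.den - (sigma1 (Stmt15.M f j) : ℝ) / Stmt15.M f j) * ((q.den:ℝ) * Stmt15.M f j)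
          = (q.num : ℝ) * Stmt15.M f j - (q.den : ℝ) * sigma1 (Stmt15.M f j) := by
        field_simp [ne_of_gt hb, ne_of_gt (hMpos j)]
      nlinarith
    have hint : (1:ℝ) ≤ (q.num : ℝ) * Stmt15.M f j - (q.den : ℝ) * sigma1 (Stmt15.M f j) := by
      have : (0:ℤ) < q.num * (Stmt15.M f j : ℤ) - (q.den : ℤ) * (sigma1 (Stmt15.M f j) : ℤ) := by
        exact_mod_cast hdiffpos
      have h1 : (1:ℤ) ≤ q.num * (Stmt15.M f j : ℤ) - (q.den : ℤ) * (sigma1 (Stmt15.M f j) : ℤ) := this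
      exact_mod_cast h1
    have hlow : 1 / ((q.den : ℝ) * Stmt15.M f j) ≤ Stmt15.L f - Stmt15.r f j := by
      rw [← hq, hqd, hr]
      rw [div_le_iff₀ (mul_pos hb (hMpos j))]
      have hexp : ((q.num:ℝ) / q.den - (sigma1 (Stmt15.M f j) : ℝ) / Stmt15.M f j) * ((q.den:ℝ) * Stmt15.M f j)
          = (q.num : ℝ) * Stmt15.M f j - (q.den : ℝ) * sigma1 (Stmt15.M f j) := by
        field_simp [ne_of_gt hb, ne_of_gt (hMpos j)]
      rw [hexp]
      linarith
    linarith
  · -- 1 < L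
    exact lt_of_le_of_lt (Stmt15.one_le_r f 0) (Stmt15.r_lt_L f 0)
  · -- main inequality
    intro i
    obtain ⟨hup, hpos⟩ := Stmt15.L_sub_r f i
    have hmaxge : f (Stmt15.M f i) ≤ max (f (Stmt15.M f i)) (((i : ℝ) + 1) * Stmt15.M f i) :=
      le_max_left _ _
    have hpow8 : (8:ℝ) ≤ (2:ℝ) ^ (i + 3) := by
      calc (8:ℝ) = 2 ^ 3 := by norm_num
        _ ≤ 2 ^ (i + 3) := by
          apply pow_le_pow_right₀ (by norm_num); omega
    have hden : (8:ℝ) * f (Stmt15.M f i) ≤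
        (2:ℝ) ^ (i + 3) * max (f (Stmt15.M f i)) (((i : ℝ) + 1) * Stmt15.M f i) := by
      have h1 := hfMpos i
      nlinarith [le_max_left (f (Stmt15.M f i)) (((i : ℝ) + 1) * Stmt15.M f i)]
    have hup2 : Stmt15.L f - Stmt15.r f i ≤ 4 / ((8:ℝ) * f (Stmt15.M f i)) :=
      le_trans hup (div_le_div_of_nonneg_left (by norm_num) (by nlinarith [hfMpos i]) hden)
    have hstrict : 4 / ((8:ℝ) * f (Stmt15.M f i)) < 1 / f (Stmt15.M f i) := by
      rw [div_lt_div_iff₀ (by nlinarith [hfMpos i]) (hfMpos i)]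
      nlinarith [hfMpos i]
    have habs : |Stmt15.L f - (sigma1 (Stmt15.M f i) : ℝ) / (Stmt15.M f i)| =
        Stmt15.L f - Stmt15.r f i := by
      rw [abs_of_pos]
      · rfl
      · exact hpos
    rw [habs]
    linarith
end
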